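/- arXiv:2312.16557 — 2 statements merged into one kernel-verified Lean document; each statement's English description precedes it below -/
import Mathlib

section
/- Let I be a nonempty countable index set and a : I → ℝⁿ a family of coefficient vectors such that a_ῑ = 0 for some ῑ ∈ I. Let ε = (ε₁, …, εₙ) be a random vector in ℝⁿ whose distribution is symmetric, i.e. ε and −ε have the same law. Assume sup_{ι∈I} |⟨ε, a_ι⟩| and sup_{ι∈I} ⟨ε, a_ι⟩ are integrable random variables, where ⟨ε, a_ι⟩ = Σ_{i=1}^n ε_i (a_ι)_i. Then E sup_{ι∈I} |⟨ε, a_ι⟩| ≤ 2 · E sup_{ι∈I} ⟨ε, a_ι⟩. -/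
open MeasureTheory ProbabilityTheory

/-- The reduction step in the proof of Lemma 1 of the paper: for a symmetric random vector `ε`
and a countable family of coefficient vectors `a_ι` containing the zero vector,
`E sup_ι |⟨ε, a_ι⟩| ≤ 2 · E sup_ι ⟨ε, a_ι⟩`. -/
theorem abs_sup_le_two_sup
    {Ω : Type*} [MeasurableSpace Ω] (μ : Measure Ω) [IsProbabilityMeasure μ]
    (n : ℕ) {I : Type*} [Countable I] [Nonempty I]
    (a : I → Fin n → ℝ) (ι₀ : I) (hzero : a ι₀ = 0)
    (ε : Ω → Fin n → ℝ) (hmeas : Measurable ε)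
    -- ε and -ε have the same law
    (hsymm : Measure.map ε μ = Measure.map (fun ω => -ε ω) μ)
    -- the suprema are (pointwise well-defined and) integrable random variables
    (hbdd1 : ∀ ω, BddAbove (Set.range fun ι : I => |∑ i, ε ω i * a ι i|))
    (hbdd2 : ∀ ω, BddAbove (Set.range fun ι : I => ∑ i, ε ω i * a ι i))
    (hint1 : Integrable (fun ω => ⨆ ι : I, |∑ i, ε ω i * a ι i|) μ)
    (hint2 : Integrable (fun ω => ⨆ ι : I, ∑ i, ε ω i * a ι i) μ) :
    ∫ ω, (⨆ ι : I, |∑ i, ε ω i * a ι i|) ∂μ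
      ≤ 2 * ∫ ω, (⨆ ι : I, ∑ i, ε ω i * a ι i) ∂μ := by
  set f : (Fin n → ℝ) → ℝ := fun v => ⨆ ι : I, ∑ i, v i * a ι i with hf
  -- T ω = sup of negated family
  set T : Ω → ℝ := fun ω => ⨆ ι : I, -∑ i, ε ω i * a ι i with hT
  have hx0 : ∀ ω, (∑ i, ε ω i * a ι₀ i) = 0 := by
    intro ω; simp [hzero]
  have hbddT : ∀ ω, BddAbove (Set.range fun ι : I => -∑ i, ε ω i * a ι i) := by
    intro ω
    obtain ⟨M, hM⟩ := hbdd1 ω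
    refine ⟨M, ?_⟩
    rintro x ⟨ι, rfl⟩
    exact le_trans (neg_le_abs _) (hM ⟨ι, rfl⟩)
  have hTle : ∀ ω, T ω ≤ ⨆ ι : I, |∑ i, ε ω i * a ι i| := by
    intro ω
    exact ciSup_le fun ι => le_trans (neg_le_abs _) (le_ciSup (hbdd1 ω) ι)
  have hTnn : ∀ ω, 0 ≤ T ω := by
    intro ω
    have := le_ciSup (hbddT ω) ι₀
    simpa [hx0 ω] using this
  have hSnn : ∀ ω, 0 ≤ ⨆ ι : I, ∑ i, ε ω i * a ι i := by
    intro ω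
    have := le_ciSup (hbdd2 ω) ι₀
    simpa [hx0 ω] using this
  -- pointwise: sup |x| ≤ S + T
  have hpt : ∀ ω, (⨆ ι : I, |∑ i, ε ω i * a ι i|)
      ≤ (⨆ ι : I, ∑ i, ε ω i * a ι i) + T ω := by
    intro ω
    refine ciSup_le fun ι => abs_le.2 ⟨?_, ?_⟩
    · have h1 : -(∑ i, ε ω i * a ι i) ≤ T ω := le_ciSup (hbddT ω) ι
      nlinarith [hSnn ω]
    · have h2 : (∑ i, ε ω i * a ι i) ≤ ⨆ ι : I, ∑ i, ε ω i * a ι i :=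
        le_ciSup (hbdd2 ω) ι
      nlinarith [hTnn ω]
  -- measurability of f
  have hfmeas : Measurable f := by
    apply Measurable.iSup
    intro ι
    exact Finset.measurable_sum _ fun i _ =>
      ((measurable_pi_apply i).mul_const _)
  have hTmeas : Measurable T := by
    apply Measurable.iSup
    intro ι
    exact (Finset.measurable_sum _ fun i _ =>
      ((measurable_pi_apply i).comp hmeas).mul_const _).neg
  have hintT : Integrable T μ := by
    refine hint1.mono hTmeas.aestronglyMeasurable ?_
    filter_upwards with ω
    rw [Real.norm_eq_abs, abs_of_nonneg (hTnn ω), Real.norm_eq_abs]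
    exact le_trans (hTle ω) (le_abs_self _)
  -- ∫ T = ∫ S via symmetry
  have hTS : ∫ ω, T ω ∂μ = ∫ ω, (⨆ ι : I, ∑ i, ε ω i * a ι i) ∂μ := by
    have h1 : ∀ ω, T ω = f (-ε ω) := by
      intro ω
      simp only [hT, hf, Pi.neg_apply, neg_mul]
      congr 1
      ext ι
      rw [← Finset.sum_neg_distrib]
    have h2 : ∫ ω, T ω ∂μ = ∫ ω, f (-ε ω) ∂μ := by
      simp_rw [h1]
    rw [h2]
    have hnegmeas : Measurable fun ω => -ε ω := hmeas.neg
    rw [← integral_map hnegmeas.aemeasurable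
      (hfmeas.aestronglyMeasurable), ← hsymm,
      integral_map hmeas.aemeasurable (hfmeas.aestronglyMeasurable)]
  calc ∫ ω, (⨆ ι : I, |∑ i, ε ω i * a ι i|) ∂μ
      ≤ ∫ ω, ((⨆ ι : I, ∑ i, ε ω i * a ι i) + T ω) ∂μ := by
        exact integral_mono hint1 (hint2.add hintT) hpt
    _ = (∫ ω, (⨆ ι : I, ∑ i, ε ω i * a ι i) ∂μ) + ∫ ω, T ω ∂μ :=
        integral_add hint2 hintT
    _ = 2 * ∫ ω, (⨆ ι : I, ∑ i, ε ω i * a ι i) ∂μ := by rw [hTS]; ring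
end

section
/- Let (Ω, F, P) be a probability space, X : Ω → ℝ^p a measurable random vector, and Y, S : Ω → {0,1} random variables with S ≤ Y almost surely. Suppose y, e, h : ℝ^p → [0,1] are Borel measurable functions such that: (i) y(X) is a version of E[Y | σ(X)]; (ii) e(X)·y(X) is a version of E[S | σ(X)]; and (iii) S + (1 − S)·h(X) is a version of E[Y | σ(X, S)]. Then almost surely h(X)·(1 − e(X)·y(X)) = y(X)·(1 − e(X)); that is, the conditional posterior probability of Y = 1 for an unlabeled instance satisfies h(x) = y(x)(1 − e(x)) / (1 − y(x)e(x)) whenever y(x)e(x) < 1. -/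
open MeasureTheory ProbabilityTheory

/-! By the tower property, `y(X) = E[Y | X] = E[S + (1 - S)·h(X) | X]`. Since `h(X)` is
`σ(X)`-measurable it can be pulled out, so `y(X) = e(X)y(X) + (1 - e(X)y(X))·h(X)`,
which rearranges to the claim. -/

section

variable {Ω : Type*} {m m₀ : MeasurableSpace Ω} {μ : Measure Ω}

theorem condExp_add_one_sub_mul_of_stronglyMeasurable [IsFiniteMeasure μ] (hm : m ≤ m₀)
    {S H : Ω → ℝ} (hH : StronglyMeasurable[m] H) (hS : Integrable S μ)
    (hSH : Integrable (S + (1 - S) * H) μ) :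
    μ[S + (1 - S) * H | m] =ᵐ[μ] μ[S | m] + (1 - μ[S | m]) * H := by
  have h1S : Integrable (1 - S) μ := (integrable_const 1).sub hS
  have h1SH : Integrable ((1 - S) * H) μ := by simpa using hSH.sub hS
  have hone_sub : μ[1 - S | m] =ᵐ[μ] 1 - μ[S | m] := by
    have hsub := condExp_sub (integrable_const (1 : ℝ)) hS m
    rwa [condExp_const hm] at hsub
  calc μ[S + (1 - S) * H | m] =ᵐ[μ] μ[S | m] + μ[(1 - S) * H | m] := condExp_add hS h1SH m
    _ =ᵐ[μ] μ[S | m] + μ[1 - S | m] * H :=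
      (condExp_mul_of_stronglyMeasurable_right hH h1SH h1S).add_left
    _ =ᵐ[μ] μ[S | m] + (1 - μ[S | m]) * H := hone_sub.mul_right.add_left

theorem comap_le_comap_prodMk {β γ : Type*} [MeasurableSpace β] [MeasurableSpace γ]
    (f : Ω → β) (g : Ω → γ) :
    MeasurableSpace.comap f inferInstance ≤
      MeasurableSpace.comap (fun ω => (f ω, g ω)) inferInstance :=
  Measurable.comap_le (measurable_fst.comp (comap_measurable _) :
    Measurable[MeasurableSpace.comap (fun ω => (f ω, g ω)) inferInstance] f)

end

theorem conditional_posterior_unlabeled_general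
    {Ω : Type*} [MeasurableSpace Ω] (μ : Measure Ω) [IsProbabilityMeasure μ]
    (p : ℕ) (X : Ω → Fin p → ℝ) (Y S : Ω → ℝ)
    (hX : Measurable X) (hS : Measurable S)
    (hS01 : ∀ ω, S ω = 0 ∨ S ω = 1)
    (y e h : (Fin p → ℝ) → ℝ)
    (hh : Measurable h)
    -- (i) y(X) is a version of E[Y | σ(X)]
    (hcondY : (μ[Y | MeasurableSpace.comap X inferInstance]) =ᵐ[μ] fun ω => y (X ω))
    -- (ii) e(X)·y(X) is a version of E[S | σ(X)]
    (hcondS : (μ[S | MeasurableSpace.comap X inferInstance])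
      =ᵐ[μ] fun ω => e (X ω) * y (X ω))
    -- (iii) S + (1 − S)·h(X) is a version of E[Y | σ(X,S)]
    (hcondYS : (μ[Y | MeasurableSpace.comap (fun ω => (X ω, S ω)) inferInstance])
      =ᵐ[μ] fun ω => S ω + (1 - S ω) * h (X ω)) :
    ∀ᵐ ω ∂μ, h (X ω) * (1 - e (X ω) * y (X ω)) = y (X ω) * (1 - e (X ω)) := by
  have hXS_le : MeasurableSpace.comap (fun ω => (X ω, S ω)) inferInstance ≤ ‹_› :=
    (hX.prodMk hS).comap_le
  have hX_le := comap_le_comap_prodMk X S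
  have hSint : Integrable S μ :=
    (integrable_const (1 : ℝ)).mono' hS.aestronglyMeasurable
      (ae_of_all _ fun ω => by rcases hS01 ω with hω | hω <;> simp [hω])
  have hhX : StronglyMeasurable[MeasurableSpace.comap X inferInstance] (h ∘ X) :=
    (hh.comp (comap_measurable X)).stronglyMeasurable
  have hpost : (fun ω => y (X ω)) =ᵐ[μ] μ[S | MeasurableSpace.comap X inferInstance]
      + (1 - μ[S | MeasurableSpace.comap X inferInstance]) * (h ∘ X) :=
    calc (fun ω => y (X ω)) =ᵐ[μ] μ[Y | MeasurableSpace.comap X inferInstance] := hcondY.symm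
      _ =ᵐ[μ] _ := (condExp_condExp_of_le hX_le hXS_le).symm
      _ =ᵐ[μ] _ := condExp_congr_ae hcondYS
      _ =ᵐ[μ] _ := condExp_add_one_sub_mul_of_stronglyMeasurable (hX_le.trans hXS_le) hhX
          hSint (integrable_condExp.congr hcondYS)
  filter_upwards [hpost, hcondS] with ω hy hS
  simp only [Pi.add_apply, Pi.mul_apply, Pi.sub_apply, Pi.one_apply, Function.comp_apply,
    hS] at hy
  linear_combination -hy

/-- Equation (10) of the paper: in the PU setting, if `y(X)` is a version of `E[Y | σ(X)]`,
`e(X)·y(X)` is a version of `E[S | σ(X)]`, and `S + (1−S)·h(X)` is a version of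
`E[Y | σ(X,S)]`, then almost surely `h(X)·(1 − e(X)·y(X)) = y(X)·(1 − e(X))`, i.e.
`h(x) = y(x)(1 − e(x))/(1 − y(x)e(x))` whenever `y(x)e(x) < 1`. -/
theorem conditional_posterior_unlabeled
    {Ω : Type*} [MeasurableSpace Ω] (μ : Measure Ω) [IsProbabilityMeasure μ]
    (p : ℕ) (X : Ω → Fin p → ℝ) (Y S : Ω → ℝ)
    (hX : Measurable X) (hY : Measurable Y) (hS : Measurable S)
    (hY01 : ∀ ω, Y ω = 0 ∨ Y ω = 1) (hS01 : ∀ ω, S ω = 0 ∨ S ω = 1)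
    -- negative examples cannot be labeled: S ≤ Y a.s.
    (hSY : ∀ᵐ ω ∂μ, S ω ≤ Y ω)
    (y e h : (Fin p → ℝ) → ℝ)
    (hy : Measurable y) (he : Measurable e) (hh : Measurable h)
    (hy01 : ∀ x, y x ∈ Set.Icc (0 : ℝ) 1) (he01 : ∀ x, e x ∈ Set.Icc (0 : ℝ) 1)
    (hh01 : ∀ x, h x ∈ Set.Icc (0 : ℝ) 1)
    -- (i) y(X) is a version of E[Y | σ(X)]
    (hcondY : (μ[Y | MeasurableSpace.comap X inferInstance]) =ᵐ[μ] fun ω => y (X ω))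
    -- (ii) e(X)·y(X) is a version of E[S | σ(X)]
    (hcondS : (μ[S | MeasurableSpace.comap X inferInstance])
      =ᵐ[μ] fun ω => e (X ω) * y (X ω))
    -- (iii) S + (1 − S)·h(X) is a version of E[Y | σ(X,S)]
    (hcondYS : (μ[Y | MeasurableSpace.comap (fun ω => (X ω, S ω)) inferInstance])
      =ᵐ[μ] fun ω => S ω + (1 - S ω) * h (X ω)) :
    ∀ᵐ ω ∂μ, h (X ω) * (1 - e (X ω) * y (X ω)) = y (X ω) * (1 - e (X ω)) :=
  conditional_posterior_unlabeled_general μ p X Y S hX hS hS01 y e h hh hcondY hcondS hcondYS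
end
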